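/- arXiv:2010.03499 — 5 statements merged into one kernel-verified Lean document; each statement's English description precedes it below -/
import Mathlib

section
/- Let $\sigma$ be a smooth positive function on a closed surface and let $\psi_1,\psi_2,\tilde\psi_1,\tilde\psi_2$ be smooth functions satisfying the coupled system $\Delta_\sigma \psi_1 = e^{\psi_1-\psi_2} - e^{-2\psi_1}\|q\|^2_\sigma + \tfrac34\kappa$ and $\Delta_\sigma \psi_2 = e^{2\psi_2} - e^{\psi_1-\psi_2} + \tfrac14\kappa$ (and similarly with $\tilde q$ in place of $q$). If $\psi_1 - \psi_2 = \tilde\psi_1 - \tilde\psi_2$ everywhere, then $\psi_2 = \tilde\psi_2$ and $\psi_1 = \tilde\psi_1$ everywhere, and $\|q\|_\sigma = \|\tilde q\|_\sigma$ everywhere. -/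
/-- Injectivity of the map from quartic differential data to induced
metrics: if two solutions of the coupled Hitchin system (with data `q` and `q̃`)
have the same difference `ψ₁ - ψ₂ = ψ̃₁ - ψ̃₂`, then the solutions coincide and the
pointwise norms of the quartic differentials agree.  The closed surface is modeled
by a compact nonempty topological space `X`, the Laplace operator `Δ_σ` by a linear
operator satisfying the maximum principle (at a max `Δu ≤ 0`, at a min `Δu ≥ 0`). -/
theorem stmt_0 {X : Type*} [TopologicalSpace X] [CompactSpace X] [Nonempty X]
    (Δ : (X → ℝ) →ₗ[ℝ] (X → ℝ))
    (hmax : ∀ (u : X → ℝ) (p : X), IsMaxOn u Set.univ p → Δ u p ≤ 0)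
    (hmin : ∀ (u : X → ℝ) (p : X), IsMinOn u Set.univ p → 0 ≤ Δ u p)
    (ψ₁ ψ₂ ψ₁' ψ₂' normq normq' κ : X → ℝ)
    (hc1 : Continuous ψ₁) (hc2 : Continuous ψ₂)
    (hc1' : Continuous ψ₁') (hc2' : Continuous ψ₂')
    (hq : ∀ p, 0 ≤ normq p) (hq' : ∀ p, 0 ≤ normq' p)
    (hPDE1 : ∀ p, Δ ψ₁ p =
      Real.exp (ψ₁ p - ψ₂ p) - Real.exp (-2 * ψ₁ p) * (normq p) ^ 2 + 3 / 4 * κ p)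
    (hPDE2 : ∀ p, Δ ψ₂ p =
      Real.exp (2 * ψ₂ p) - Real.exp (ψ₁ p - ψ₂ p) + 1 / 4 * κ p)
    (hPDE1' : ∀ p, Δ ψ₁' p =
      Real.exp (ψ₁' p - ψ₂' p) - Real.exp (-2 * ψ₁' p) * (normq' p) ^ 2 + 3 / 4 * κ p)
    (hPDE2' : ∀ p, Δ ψ₂' p =
      Real.exp (2 * ψ₂' p) - Real.exp (ψ₁' p - ψ₂' p) + 1 / 4 * κ p)
    (hdiff : ∀ p, ψ₁ p - ψ₂ p = ψ₁' p - ψ₂' p) :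
    (∀ p, ψ₂ p = ψ₂' p) ∧ (∀ p, ψ₁ p = ψ₁' p) ∧ (∀ p, normq p = normq' p) := by
  have hΔu : ∀ p, Δ (ψ₂ - ψ₂') p = Real.exp (2 * ψ₂ p) - Real.exp (2 * ψ₂' p) := by
    intro p
    have := map_sub Δ ψ₂ ψ₂'
    have h : Δ (ψ₂ - ψ₂') p = Δ ψ₂ p - Δ ψ₂' p := by rw [this]; rfl
    rw [h, hPDE2 p, hPDE2' p, hdiff p]; ring
  have h2 : ∀ p, ψ₂ p = ψ₂' p := by
    have hcu : Continuous (ψ₂ - ψ₂') := hc2.sub hc2'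
    obtain ⟨pM, -, hM⟩ := isCompact_univ.exists_isMaxOn Set.univ_nonempty hcu.continuousOn
    obtain ⟨pm, -, hm⟩ := isCompact_univ.exists_isMinOn Set.univ_nonempty hcu.continuousOn
    have hMle : Δ (ψ₂ - ψ₂') pM ≤ 0 := hmax _ pM hM
    have hmge : 0 ≤ Δ (ψ₂ - ψ₂') pm := hmin _ pm hm
    rw [hΔu pM, sub_nonpos] at hMle
    rw [hΔu pm, sub_nonneg] at hmge
    have hM' : ψ₂ pM ≤ ψ₂' pM := by
      have := Real.exp_le_exp.mp hMle; linarith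
    have hm' : ψ₂' pm ≤ ψ₂ pm := by
      have := Real.exp_le_exp.mp hmge; linarith
    intro p
    have h1 : (ψ₂ - ψ₂') p ≤ (ψ₂ - ψ₂') pM := hM (Set.mem_univ p)
    have h2 : (ψ₂ - ψ₂') pm ≤ (ψ₂ - ψ₂') p := hm (Set.mem_univ p)
    simp only [Pi.sub_apply] at h1 h2
    linarith
  have h1 : ∀ p, ψ₁ p = ψ₁' p := by
    intro p; have := hdiff p; have := h2 p; linarith
  refine ⟨h2, h1, fun p => ?_⟩
  have e1 := hPDE1 p
  rw [hdiff p, h1 p] at e1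
  have e2 := hPDE1' p
  have hfun : ψ₁ = ψ₁' := funext h1
  rw [hfun] at e1
  have key : Real.exp (-2 * ψ₁' p) * normq p ^ 2 = Real.exp (-2 * ψ₁' p) * normq' p ^ 2 := by
    linarith [e1, e2]
  have hpos : (0:ℝ) < Real.exp (-2 * ψ₁' p) := Real.exp_pos _
  have : normq p ^ 2 = normq' p ^ 2 := by
    exact mul_left_cancel₀ (ne_of_gt hpos) key
  nlinarith [hq p, hq' p]
end

section
/- For smooth positive functions $f_1, f_2$ on an open set in a Riemannian surface, one has the pointwise inequality $\Delta \log(f_1+f_2) \ge \frac{f_1\,\Delta \log f_1 + f_2\,\Delta \log f_2}{f_1+f_2}$. -/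
/-- The (Euclidean) Laplacian on `ℝ²`; in local conformal coordinates the
Laplace–Beltrami operator of a Riemannian surface is a positive multiple of it,
so the convexity inequality below is equivalent to its Riemannian version. -/
noncomputable def lap (u : EuclideanSpace ℝ (Fin 2) → ℝ)
    (p : EuclideanSpace ℝ (Fin 2)) : ℝ :=
  ∑ i : Fin 2,
    iteratedFDeriv ℝ 2 u p ![EuclideanSpace.single i 1, EuclideanSpace.single i 1]

open Real Filter

local notation "E" => EuclideanSpace ℝ (Fin 2)

lemma second_log {f : E → ℝ} {U : Set E} (hU : IsOpen U)
    (hf : ContDiffOn ℝ (⊤ : ℕ∞) f U) (hpos : ∀ x ∈ U, 0 < f x)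
    {p : E} (hp : p ∈ U) (v : E) :
    fderiv ℝ (fderiv ℝ (fun x => Real.log (f x))) p v v
      = (f p)⁻¹ * fderiv ℝ (fderiv ℝ f) p v v
        - ((f p)⁻¹ * fderiv ℝ f p v) ^ 2 := by
  have hd : ∀ x ∈ U, HasFDerivAt f (fderiv ℝ f x) x := fun x hx =>
    ((hf.contDiffAt (hU.mem_nhds hx)).differentiableAt (by simp)).hasFDerivAt
  have hlog : ∀ x ∈ U, HasFDerivAt (fun y => Real.log (f y))
      ((f x)⁻¹ • fderiv ℝ f x) x := fun x hx =>
    (Real.hasDerivAt_log (hpos x hx).ne').comp_hasFDerivAt x (hd x hx)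
  have heq : fderiv ℝ (fun x => Real.log (f x)) =ᶠ[nhds p]
      fun x => (f x)⁻¹ • fderiv ℝ f x :=
    Filter.eventually_of_mem (hU.mem_nhds hp) fun x hx => (hlog x hx).fderiv
  have hF : HasFDerivAt (fderiv ℝ f) (fderiv ℝ (fderiv ℝ f) p) p :=
    (((hf.contDiffAt (hU.mem_nhds hp)).fderiv_right (WithTop.coe_le_coe.mpr le_top)).differentiableAt
      one_ne_zero).hasFDerivAt
  have hinv : HasFDerivAt (fun y => (f y)⁻¹)
      ((-(f p ^ 2)⁻¹) • fderiv ℝ f p) p :=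
    (hasDerivAt_inv (hpos p hp).ne').comp_hasFDerivAt p (hd p hp)
  have hsm := hinv.smul hF
  rw [heq.fderiv_eq, show (fun x => (f x)⁻¹ • fderiv ℝ f x) = (fun y => (f y)⁻¹) • fderiv ℝ f from rfl, hsm.fderiv]
  simp only [ContinuousLinearMap.add_apply, ContinuousLinearMap.smul_apply,
    ContinuousLinearMap.smulRight_apply, ContinuousLinearMap.coe_smul',
    Pi.smul_apply, smul_eq_mul]
  ring

lemma second_add {f₁ f₂ : E → ℝ} {U : Set E} (hU : IsOpen U)
    (h1 : ContDiffOn ℝ (⊤ : ℕ∞) f₁ U) (h2 : ContDiffOn ℝ (⊤ : ℕ∞) f₂ U)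
    {p : E} (hp : p ∈ U) (v : E) :
    fderiv ℝ (fderiv ℝ (fun x => f₁ x + f₂ x)) p v v
      = fderiv ℝ (fderiv ℝ f₁) p v v + fderiv ℝ (fderiv ℝ f₂) p v v := by
  have hd : ∀ (f : E → ℝ), ContDiffOn ℝ (⊤ : ℕ∞) f U → ∀ x ∈ U,
      HasFDerivAt f (fderiv ℝ f x) x := fun f hf x hx =>
    ((hf.contDiffAt (hU.mem_nhds hx)).differentiableAt (by simp)).hasFDerivAt
  have heq : fderiv ℝ (fun x => f₁ x + f₂ x) =ᶠ[nhds p]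
      fun x => fderiv ℝ f₁ x + fderiv ℝ f₂ x :=
    Filter.eventually_of_mem (hU.mem_nhds hp) fun x hx =>
      ((hd f₁ h1 x hx).add (hd f₂ h2 x hx)).fderiv
  have hF : ∀ (f : E → ℝ), ContDiffOn ℝ (⊤ : ℕ∞) f U →
      HasFDerivAt (fderiv ℝ f) (fderiv ℝ (fderiv ℝ f) p) p := fun f hf =>
    (((hf.contDiffAt (hU.mem_nhds hp)).fderiv_right (WithTop.coe_le_coe.mpr le_top)).differentiableAt
      one_ne_zero).hasFDerivAt
  have hsum := (hF f₁ h1).add (hF f₂ h2)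
  rw [heq.fderiv_eq, show (fun x => fderiv ℝ f₁ x + fderiv ℝ f₂ x) = fderiv ℝ f₁ + fderiv ℝ f₂ from rfl, hsum.fderiv]
  simp

lemma first_add {f₁ f₂ : E → ℝ} {U : Set E} (hU : IsOpen U)
    (h1 : ContDiffOn ℝ (⊤ : ℕ∞) f₁ U) (h2 : ContDiffOn ℝ (⊤ : ℕ∞) f₂ U)
    {p : E} (hp : p ∈ U) (v : E) :
    fderiv ℝ (fun x => f₁ x + f₂ x) p v = fderiv ℝ f₁ p v + fderiv ℝ f₂ p v := by
  have hd : ∀ (f : E → ℝ), ContDiffOn ℝ (⊤ : ℕ∞) f U →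
      HasFDerivAt f (fderiv ℝ f p) p := fun f hf =>
    ((hf.contDiffAt (hU.mem_nhds hp)).differentiableAt (by simp)).hasFDerivAt
  rw [show (fun x => f₁ x + f₂ x) = f₁ + f₂ from rfl, ((hd f₁ h1).add (hd f₂ h2)).fderiv]; simp

lemma key_ineq {x y a b A B : ℝ} (hx : 0 < x) (hy : 0 < y) :
    (x * (x⁻¹ * A - (x⁻¹ * a) ^ 2) + y * (y⁻¹ * B - (y⁻¹ * b) ^ 2)) / (x + y)
      ≤ (x + y)⁻¹ * (A + B) - ((x + y)⁻¹ * (a + b)) ^ 2 := by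
  have hxy : 0 < x + y := by linarith
  rw [div_le_iff₀ hxy]
  have h : (a + b) ^ 2 / (x + y) ≤ a ^ 2 / x + b ^ 2 / y := by
    rw [div_add_div _ _ hx.ne' hy.ne', div_le_div_iff₀ hxy (by positivity)]
    nlinarith [sq_nonneg (a * y - b * x)]
  have e1 : x * (x⁻¹ * A - (x⁻¹ * a) ^ 2) = A - a ^ 2 / x := by
    field_simp
  have e2 : y * (y⁻¹ * B - (y⁻¹ * b) ^ 2) = B - b ^ 2 / y := by
    field_simp
  have e3 : ((x + y)⁻¹ * (A + B) - ((x + y)⁻¹ * (a + b)) ^ 2) * (x + y)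
      = A + B - (a + b) ^ 2 / (x + y) := by
    field_simp
  rw [e1, e2, e3]
  linarith

/-- For smooth positive functions `f₁, f₂` on an open set of a
(Riemannian) surface, `Δ log(f₁+f₂) ≥ (f₁ Δ log f₁ + f₂ Δ log f₂)/(f₁+f₂)`. -/
theorem stmt_2 (U : Set (EuclideanSpace ℝ (Fin 2))) (hU : IsOpen U)
    (f₁ f₂ : EuclideanSpace ℝ (Fin 2) → ℝ)
    (h1 : ContDiffOn ℝ (⊤ : ℕ∞) f₁ U) (h2 : ContDiffOn ℝ (⊤ : ℕ∞) f₂ U)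
    (h1p : ∀ p ∈ U, 0 < f₁ p) (h2p : ∀ p ∈ U, 0 < f₂ p) :
    ∀ p ∈ U,
      (f₁ p * lap (fun x => Real.log (f₁ x)) p +
          f₂ p * lap (fun x => Real.log (f₂ x)) p) / (f₁ p + f₂ p) ≤
        lap (fun x => Real.log (f₁ x + f₂ x)) p := by
  intro p hp
  have hsum : ContDiffOn ℝ (⊤ : ℕ∞) (fun x => f₁ x + f₂ x) U := h1.add h2
  have hsump : ∀ x ∈ U, 0 < f₁ x + f₂ x := fun x hx =>
    add_pos (h1p x hx) (h2p x hx)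
  simp only [lap, iteratedFDeriv_two_apply]
  simp only [Matrix.cons_val_zero, Matrix.cons_val_one, Matrix.head_cons]
  have hx := h1p p hp
  have hy := h2p p hp
  have hxy : 0 < f₁ p + f₂ p := add_pos hx hy
  calc (f₁ p * ∑ i : Fin 2,
        fderiv ℝ (fderiv ℝ fun x => Real.log (f₁ x)) p (EuclideanSpace.single i 1)
          (EuclideanSpace.single i 1) +
      f₂ p * ∑ i : Fin 2,
        fderiv ℝ (fderiv ℝ fun x => Real.log (f₂ x)) p (EuclideanSpace.single i 1)
          (EuclideanSpace.single i 1)) / (f₁ p + f₂ p)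
      = ∑ i : Fin 2,
        (f₁ p * ((f₁ p)⁻¹ * fderiv ℝ (fderiv ℝ f₁) p (EuclideanSpace.single i 1)
              (EuclideanSpace.single i 1)
            - ((f₁ p)⁻¹ * fderiv ℝ f₁ p (EuclideanSpace.single i 1)) ^ 2)
          + f₂ p * ((f₂ p)⁻¹ * fderiv ℝ (fderiv ℝ f₂) p (EuclideanSpace.single i 1)
              (EuclideanSpace.single i 1)
            - ((f₂ p)⁻¹ * fderiv ℝ f₂ p (EuclideanSpace.single i 1)) ^ 2)) / (f₁ p + f₂ p) := by
        rw [← Finset.sum_div]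
        congr 1
        rw [Finset.mul_sum, Finset.mul_sum, ← Finset.sum_add_distrib]
        refine Finset.sum_congr rfl fun i _ => ?_
        rw [second_log hU h1 h1p hp, second_log hU h2 h2p hp]
    _ ≤ ∑ i : Fin 2,
        ((f₁ p + f₂ p)⁻¹ * (fderiv ℝ (fderiv ℝ f₁) p (EuclideanSpace.single i 1)
              (EuclideanSpace.single i 1)
            + fderiv ℝ (fderiv ℝ f₂) p (EuclideanSpace.single i 1)
              (EuclideanSpace.single i 1))
          - ((f₁ p + f₂ p)⁻¹ * (fderiv ℝ f₁ p (EuclideanSpace.single i 1)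
            + fderiv ℝ f₂ p (EuclideanSpace.single i 1))) ^ 2) := by
        refine Finset.sum_le_sum fun i _ => key_ineq hx hy
    _ = ∑ i : Fin 2,
        fderiv ℝ (fderiv ℝ fun x => Real.log (f₁ x + f₂ x)) p (EuclideanSpace.single i 1)
          (EuclideanSpace.single i 1) := by
        refine Finset.sum_congr rfl fun i _ => ?_
        rw [second_log hU hsum hsump hp, second_add hU h1 h2 hp, first_add hU h1 h2 hp]
end

section
/- Let $\kappa < 0$ be a constant with $1 + \tfrac14\kappa > 0$, and let $M \ge 0$. Then there exist constants $c_2 > 0$ and $c_1 = 3c_2 + \log(1 + \tfrac14\kappa)$ such that $e^{c_1-c_2} - e^{-2c_1} M + \tfrac34\kappa \ge 0$ and $e^{2c_2} - e^{c_1-c_2} + \tfrac14\kappa \ge 0$. -/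
/-- Existence of constant super-solutions for the cyclic `Sp(4,ℝ)`
Hitchin equations: for a constant `κ < 0` with `1 + κ/4 > 0` and `M ≥ 0`
(playing the role of `max_S ‖q‖²_σ`), there exist `c₂ > 0` and
`c₁ = 3c₂ + log(1 + κ/4)` making the right-hand sides nonnegative. -/
theorem stmt_4 (κ M : ℝ) (hκ : κ < 0) (hκ' : 0 < 1 + 1 / 4 * κ) (hM : 0 ≤ M) :
    ∃ c₂ > (0 : ℝ), ∃ c₁ : ℝ, c₁ = 3 * c₂ + Real.log (1 + 1 / 4 * κ) ∧
      0 ≤ Real.exp (c₁ - c₂) - Real.exp (-2 * c₁) * M + 3 / 4 * κ ∧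
      0 ≤ Real.exp (2 * c₂) - Real.exp (c₁ - c₂) + 1 / 4 * κ := by
  set a : ℝ := 1 + 1 / 4 * κ with ha_def
  have ha : 0 < a := hκ'
  set c₂ : ℝ := max 1 ((M / a ^ 2 - 3 / 4 * κ) / a) with hc2_def
  have hc2pos : (0 : ℝ) < c₂ := lt_of_lt_of_le one_pos (le_max_left _ _)
  clear_value c₂
  clear_value a
  refine ⟨c₂, hc2pos, 3 * c₂ + Real.log a, by rw [ha_def], ?_, ?_⟩
  · have h1 : Real.exp (3 * c₂ + Real.log a - c₂) = Real.exp (2 * c₂) * a := by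
      rw [show 3 * c₂ + Real.log a - c₂ = 2 * c₂ + Real.log a by ring,
        Real.exp_add, Real.exp_log ha]
    have h2 : Real.exp (-2 * (3 * c₂ + Real.log a)) = Real.exp (-6 * c₂) / a ^ 2 := by
      rw [show -2 * (3 * c₂ + Real.log a) = -6 * c₂ + (-(Real.log a) + -(Real.log a)) by ring,
        Real.exp_add, Real.exp_add, Real.exp_neg, Real.exp_log ha]
      field_simp
    rw [h1, h2]
    have hexp : c₂ ≤ Real.exp (2 * c₂) := by
      calc c₂ ≤ 2 * c₂ := by linarith
        _ ≤ Real.exp (2 * c₂) := (Real.add_one_le_exp _).trans' (by linarith)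
    have hc2ge : (M / a ^ 2 - 3 / 4 * κ) / a ≤ c₂ := by rw [hc2_def]; exact le_max_right _ _
    have h3 : M / a ^ 2 - 3 / 4 * κ ≤ c₂ * a := by
      rw [div_le_iff₀ ha] at hc2ge; linarith
    have h4 : Real.exp (-6 * c₂) / a ^ 2 * M ≤ M / a ^ 2 := by
      have : Real.exp (-6 * c₂) ≤ 1 := Real.exp_le_one_iff.mpr (by linarith)
      rw [div_mul_eq_mul_div, div_le_div_iff₀ (by positivity) (by positivity)]
      nlinarith [mul_nonneg hM (sq_nonneg a)]
    have h5 : c₂ * a ≤ Real.exp (2 * c₂) * a := mul_le_mul_of_nonneg_right hexp ha.le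
    linarith
  · have h1 : Real.exp (3 * c₂ + Real.log a - c₂) = Real.exp (2 * c₂) * a := by
      rw [show 3 * c₂ + Real.log a - c₂ = 2 * c₂ + Real.log a by ring,
        Real.exp_add, Real.exp_log ha]
    rw [h1]
    have hexp1 : (1 : ℝ) ≤ Real.exp (2 * c₂) := Real.one_le_exp (by linarith)
    nlinarith
end

section
/- Let $\kappa < 0$ be a constant and let $\psi_1,\psi_2$ be smooth functions on a closed surface satisfying $\Delta \psi_1 = e^{\psi_1-\psi_2} - e^{-2\psi_1}\|q\|^2 + \tfrac34\kappa$ and $\Delta \psi_2 = e^{2\psi_2} - e^{\psi_1-\psi_2} + \tfrac14\kappa$, with $\|q\|^2 \ge 0$. Then $e^{\psi_1-\psi_2} \ge -\tfrac34\kappa$ everywhere; consequently the induced metric $g = 4e^{\psi_1-\psi_2}\sigma$ satisfies $g \ge -3\kappa\,\sigma$. -/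
/-- Solutions of the Hitchin system on a closed surface satisfy
`e^{ψ₁-ψ₂} ≥ -3κ/4`; consequently the induced metric `g = 4e^{ψ₁-ψ₂}σ` dominates
`-3κ·σ`.  The closed surface is a compact nonempty space, `Δ` is the Laplacian of
the background metric `σ` of constant curvature `κ < 0`, modeled as a linear
operator satisfying the minimum principle (`Δu ≥ 0` at a minimum of `u`). -/
theorem stmt_5 {X : Type*} [TopologicalSpace X] [CompactSpace X] [Nonempty X]
    (Δ : (X → ℝ) →ₗ[ℝ] (X → ℝ))
    (hmin : ∀ (u : X → ℝ) (p : X), IsMinOn u Set.univ p → 0 ≤ Δ u p)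
    (ψ₁ ψ₂ normq σ : X → ℝ) (κ : ℝ) (hκ : κ < 0)
    (hc1 : Continuous ψ₁) (hc2 : Continuous ψ₂)
    (hσ : ∀ p, 0 < σ p) (hq : ∀ p, 0 ≤ normq p)
    (hPDE1 : ∀ p, Δ ψ₁ p =
      Real.exp (ψ₁ p - ψ₂ p) - Real.exp (-2 * ψ₁ p) * (normq p) ^ 2 + 3 / 4 * κ)
    (hPDE2 : ∀ p, Δ ψ₂ p =
      Real.exp (2 * ψ₂ p) - Real.exp (ψ₁ p - ψ₂ p) + 1 / 4 * κ) :
    (∀ p, -(3 / 4) * κ ≤ Real.exp (ψ₁ p - ψ₂ p)) ∧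
    (∀ p, -3 * κ * σ p ≤ 4 * Real.exp (ψ₁ p - ψ₂ p) * σ p) := by
  -- minimum point of f = ψ₁ - ψ₂
  obtain ⟨p, -, hp⟩ := CompactSpace.isCompact_univ.exists_isMinOn
    Set.univ_nonempty ((hc1.sub hc2).continuousOn)
  -- minimum point of ψ₂
  obtain ⟨r, -, hr⟩ := CompactSpace.isCompact_univ.exists_isMinOn
    Set.univ_nonempty hc2.continuousOn
  -- minimum principle at p for f
  have h1 : 0 ≤ Δ (ψ₁ - ψ₂) p := hmin _ p hp
  have hΔsub : Δ (ψ₁ - ψ₂) p = Δ ψ₁ p - Δ ψ₂ p := by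
    rw [map_sub]; rfl
  -- minimum principle at r for ψ₂
  have h2 : 0 ≤ Δ ψ₂ r := hmin _ r hr
  rw [hPDE2 r] at h2
  -- e^{2ψ₂(r)} ≥ e^{f(r)} - κ/4 ≥ e^{f(p)} - κ/4
  have hfr : Real.exp (ψ₁ p - ψ₂ p) ≤ Real.exp (ψ₁ r - ψ₂ r) := by
    have := hp (Set.mem_univ r)
    simpa using Real.exp_le_exp.mpr this
  have hσ2 : Real.exp (ψ₁ p - ψ₂ p) - 1 / 4 * κ ≤ Real.exp (2 * ψ₂ r) := by
    linarith
  -- e^{2ψ₂(p)} ≥ e^{2ψ₂(r)}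
  have hψ2p : Real.exp (2 * ψ₂ r) ≤ Real.exp (2 * ψ₂ p) := by
    have h : ψ₂ r ≤ ψ₂ p := hr (Set.mem_univ p)
    exact Real.exp_le_exp.mpr (by linarith)
  -- combine at p
  rw [hΔsub, hPDE1 p, hPDE2 p] at h1
  have hq2 : 0 ≤ Real.exp (-2 * ψ₁ p) * (normq p) ^ 2 :=
    mul_nonneg (Real.exp_pos _).le (sq_nonneg _)
  have key : -(3 / 4) * κ ≤ Real.exp (ψ₁ p - ψ₂ p) := by linarith
  have main : ∀ x, -(3 / 4) * κ ≤ Real.exp (ψ₁ x - ψ₂ x) := by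
    intro x
    have := hp (Set.mem_univ x)
    have : Real.exp (ψ₁ p - ψ₂ p) ≤ Real.exp (ψ₁ x - ψ₂ x) :=
      Real.exp_le_exp.mpr (by simpa using this)
    linarith
  refine ⟨main, fun x => ?_⟩
  have := main x
  nlinarith [hσ x, (hσ x).le]
end

section
/- Let $\psi_1,\psi_2$ be smooth solutions on a closed surface of the system $\Delta_\sigma \psi_1 = e^{\psi_1-\psi_2} - e^{-2\psi_1}\|q\|^2_\sigma + \tfrac34\kappa(\sigma)$, $\Delta_\sigma \psi_2 = e^{2\psi_2} - e^{\psi_1-\psi_2} + \tfrac14\kappa(\sigma)$. Then $3\psi_2 - \psi_1 \le \log(4/3)$ everywhere. -/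
/-- Solutions of the Hitchin system on a closed surface satisfy the
uniform bound `3ψ₂ - ψ₁ ≤ log(4/3)`.  The Laplacian of the hyperbolic background
metric (curvature `κ(σ) < 0`, here a function `κ`) is modeled by a linear operator
satisfying the maximum principle. -/
theorem stmt_6 {X : Type*} [TopologicalSpace X] [CompactSpace X] [Nonempty X]
    (Δ : (X → ℝ) →ₗ[ℝ] (X → ℝ))
    (hmax : ∀ (u : X → ℝ) (p : X), IsMaxOn u Set.univ p → Δ u p ≤ 0)
    (ψ₁ ψ₂ normq κ : X → ℝ) (hκ : ∀ p, κ p < 0)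
    (hc1 : Continuous ψ₁) (hc2 : Continuous ψ₂)
    (hq : ∀ p, 0 ≤ normq p)
    (hPDE1 : ∀ p, Δ ψ₁ p =
      Real.exp (ψ₁ p - ψ₂ p) - Real.exp (-2 * ψ₁ p) * (normq p) ^ 2 + 3 / 4 * κ p)
    (hPDE2 : ∀ p, Δ ψ₂ p =
      Real.exp (2 * ψ₂ p) - Real.exp (ψ₁ p - ψ₂ p) + 1 / 4 * κ p) :
    ∀ p, 3 * ψ₂ p - ψ₁ p ≤ Real.log (4 / 3) := by
  set u : X → ℝ := (3 : ℝ) • ψ₂ - ψ₁ with hu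
  have hcu : Continuous u := (hc2.const_smul (3:ℝ)).sub hc1
  obtain ⟨p₀, -, hp₀⟩ := CompactSpace.isCompact_univ.exists_isMaxOn
    Set.univ_nonempty hcu.continuousOn
  have hΔu : Δ u p₀ ≤ 0 := hmax u p₀ hp₀
  have hΔeq : Δ u p₀ = 3 * Δ ψ₂ p₀ - Δ ψ₁ p₀ := by
    simp [hu, map_sub, map_smul]
  rw [hΔeq, hPDE1, hPDE2] at hΔu
  have hkey : 3 * Real.exp (2 * ψ₂ p₀) ≤ 4 * Real.exp (ψ₁ p₀ - ψ₂ p₀) := by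
    nlinarith [mul_nonneg (Real.exp_nonneg (-2 * ψ₁ p₀)) (sq_nonneg (normq p₀))]
  have hmax' : u p₀ ≤ Real.log (4 / 3) := by
    have h2 : Real.exp (3 * ψ₂ p₀ - ψ₁ p₀) ≤ 4 / 3 := by
      have := hkey
      rw [show (3 : ℝ) * ψ₂ p₀ - ψ₁ p₀ = 2 * ψ₂ p₀ - (ψ₁ p₀ - ψ₂ p₀) by ring,
        Real.exp_sub, div_le_div_iff₀ (Real.exp_pos _) (by norm_num)]
      linarith
    calc u p₀ = 3 * ψ₂ p₀ - ψ₁ p₀ := by simp [hu]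
    _ ≤ Real.log (4 / 3) := by
        have := Real.log_le_log (Real.exp_pos _) h2
        rwa [Real.log_exp] at this
  intro p
  have := hp₀ (Set.mem_univ p)
  simp only [hu, Set.mem_setOf_eq, Pi.sub_apply, Pi.smul_apply, smul_eq_mul] at this hmax'
  linarith
end
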